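/- Let $D_1, D_2$ be positive integers with $\gcd(D_1, D_2) = 1$. Then the GL(3) long Weyl element Kloosterman sum factorizes as $S(m_1, m_2, n_1, n_2; D_1, D_2) = S(m_1 D_2, n_1; D_1) \cdot S(n_2 D_1, m_2; D_2)$, where the factors on the right are classical Kloosterman sums $S(a, b; c) = \sum_{x \bmod c, \gcd(x,c)=1} e\left(\frac{ax + b\bar{x}}{c}\right)$. -/

import Mathlib

open Finset

/-- `e(x) = e^{2πix}`. -/
noncomputable def efn (x : ℝ) : ℂ := Complex.exp (2 * Real.pi * Complex.I * x)

/-- Classical Kloosterman sum `S(a,b;c) = ∑_{x mod c, (x,c)=1} e((ax + b x̄)/c)`. -/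
noncomputable def Kl (a b : ℤ) (c : ℕ) : ℂ :=
  ∑ x ∈ Finset.range c, if Nat.gcd x c = 1 then
    efn (((a * x + b * (((x : ZMod c)⁻¹).val : ℤ) : ℤ) : ℝ) / c) else 0

/-- A canonical choice of `Y` with `Y·B + Z·C ≡ 1 (mod D)` when `gcd(B,C,D)=1`. -/
def Ycoef (B C D : ℕ) : ℤ := Nat.gcdA B (Nat.gcd C D)

/-- A canonical choice of `Z` with `Y·B + Z·C ≡ 1 (mod D)` when `gcd(B,C,D)=1`. -/
def Zcoef (B C D : ℕ) : ℤ := Nat.gcdB B (Nat.gcd C D) * Nat.gcdA C D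

/-- The GL(3) long Weyl element Kloosterman sum `S(m₁,m₂,n₁,n₂;D₁,D₂)`. -/
noncomputable def SGL3 (m1 m2 n1 n2 : ℤ) (D1 D2 : ℕ) : ℂ :=
  ∑ B1 ∈ Finset.range D1, ∑ C1 ∈ Finset.range D1,
  ∑ B2 ∈ Finset.range D2, ∑ C2 ∈ Finset.range D2,
    if Nat.gcd B1 (Nat.gcd C1 D1) = 1 ∧ Nat.gcd B2 (Nat.gcd C2 D2) = 1 ∧
       (D1 * D2) ∣ (D1 * C2 + B1 * B2 + D2 * C1) then
      efn ((((m1 * B1 + n1 * (Ycoef B1 C1 D1 * D2 - Zcoef B1 C1 D1 * B2)) : ℤ) : ℝ) / D1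
        + (((m2 * B2 + n2 * (Ycoef B2 C2 D2 * D1 - Zcoef B2 C2 D2 * B1)) : ℤ) : ℝ) / D2)
    else 0

/-! For fixed `B₁, B₂` the congruence `D₁C₂ + B₁B₂ + D₂C₁ ≡ 0 (mod D₁D₂)` splits, by coprimality,
into `D₂C₁ ≡ -B₁B₂ (mod D₁)` and `D₁C₂ ≡ -B₁B₂ (mod D₂)`, which determine `C₁` and `C₂`; under
it the conditions `gcd(Bⱼ, Cⱼ, Dⱼ) = 1` become `gcd(Bⱼ, Dⱼ) = 1`. Since
`B₁(Y₁D₂ - Z₁B₂) ≡ D₂(Y₁B₁ + Z₁C₁) ≡ D₂ (mod D₁)`, and symmetrically mod `D₂`, the sum collapses to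
`S(m₁, n₁D₂; D₁) S(m₂, n₂D₁; D₂)`. The substitutions `x ↦ D₂x` and `x ↦ x̄` in the two classical
sums give the stated form. -/

lemma efn_add (x y : ℝ) : efn (x + y) = efn x * efn y := by
  simp only [efn, Complex.ofReal_add, mul_add, Complex.exp_add]

lemma efn_intCast_div (D : ℕ) [NeZero D] (k : ℤ) :
    efn ((k : ℝ) / D) = ZMod.stdAddChar (k : ZMod D) := by
  rw [efn, ZMod.stdAddChar_coe]
  push_cast
  ring_nf

lemma Kl_eq_sum_range (a b : ℤ) (c : ℕ) [NeZero c] :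
    Kl a b c = ∑ x ∈ range c,
      if Nat.gcd x c = 1 then
        ZMod.stdAddChar ((a : ZMod c) * (x : ZMod c) + (b : ZMod c) * (x : ZMod c)⁻¹)
      else 0 := by
  refine sum_congr rfl fun x _ => ?_
  rw [efn_intCast_div]
  push_cast [ZMod.natCast_val, ZMod.cast_id]
  rfl

lemma Kl_eq_sum_units (a b : ℤ) (c : ℕ) [NeZero c] :
    Kl a b c = ∑ u : (ZMod c)ˣ,
      ZMod.stdAddChar ((a : ZMod c) * (u : ZMod c) + (b : ZMod c) * (↑u⁻¹ : ZMod c)) := by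
  rw [Kl_eq_sum_range, ← sum_filter]
  refine sum_bij' (fun x hx => ZMod.unitOfCoprime x (mem_filter.1 hx).2)
    (fun u _ => (u : ZMod c).val) (fun _ _ => mem_univ _) (fun u _ => ?_) (fun x hx => ?_)
    (fun u _ => ?_) (fun x hx => ?_)
  · exact mem_filter.2 ⟨mem_range.2 (ZMod.val_lt _), ZMod.val_coe_unit_coprime u⟩
  · rw [ZMod.coe_unitOfCoprime, ZMod.val_cast_of_lt (mem_range.1 (mem_filter.1 hx).1)]
  · exact Units.ext (ZMod.natCast_zmod_val _)
  · rw [← ZMod.inv_coe_unit, ZMod.coe_unitOfCoprime]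

lemma Kl_comm (a b : ℤ) (c : ℕ) [NeZero c] : Kl a b c = Kl b a c := by
  rw [Kl_eq_sum_units, Kl_eq_sum_units]
  exact Fintype.sum_equiv (Equiv.inv _) _ _ fun u => by simp [add_comm]

lemma Kl_mul_left (a b : ℤ) {c d : ℕ} [NeZero c] (hd : Nat.Coprime d c) :
    Kl (a * d) b c = Kl a (b * d) c := by
  rw [Kl_eq_sum_units, Kl_eq_sum_units]
  refine Fintype.sum_equiv (Equiv.mulLeft (ZMod.unitOfCoprime d hd)) _ _ fun u => ?_
  have hdd : (d : ZMod c) * ↑(ZMod.unitOfCoprime d hd)⁻¹ = 1 := by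
    rw [← ZMod.coe_unitOfCoprime d hd, Units.mul_inv]
  simp only [Equiv.coe_mulLeft, Units.val_mul, mul_inv_rev, ZMod.coe_unitOfCoprime]
  push_cast
  congr 1
  linear_combination -(b : ZMod c) * (↑u⁻¹ : ZMod c) * hdd

lemma Ycoef_mul_add_Zcoef_mul {B C D : ℕ} (h : Nat.gcd B (Nat.gcd C D) = 1) :
    (Ycoef B C D : ZMod D) * B + (Zcoef B C D : ZMod D) * C = 1 := by
  have h1 := congrArg (Int.cast : ℤ → ZMod D) (Nat.gcd_eq_gcd_ab B (Nat.gcd C D))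
  have h2 := congrArg (Int.cast : ℤ → ZMod D) (Nat.gcd_eq_gcd_ab C D)
  rw [h] at h1
  push_cast [ZMod.natCast_self] at h1 h2
  simp only [Ycoef, Zcoef, Int.cast_mul]
  linear_combination -h1 - (Nat.gcdB B (Nat.gcd C D) : ZMod D) * h2

lemma Ycoef_mul_sub_Zcoef_mul {B B' C D D' : ℕ} (hB : Nat.Coprime B D)
    (hC : (B * B' + D' * C : ZMod D) = 0) :
    (Ycoef B C D : ZMod D) * D' - (Zcoef B C D : ZMod D) * B' = D' * (B : ZMod D)⁻¹ := by
  have hinv : (B : ZMod D)⁻¹ * B = 1 :=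
    ZMod.inv_mul_of_unit _ ((ZMod.isUnit_iff_coprime B D).mpr hB)
  have hYZ := Ycoef_mul_add_Zcoef_mul (Nat.Coprime.coprime_dvd_right (Nat.gcd_dvd_right C D) hB)
  linear_combination (-((Ycoef B C D : ZMod D) * D' - (Zcoef B C D : ZMod D) * B')) * hinv
    + (B : ZMod D)⁻¹ * ((D' : ZMod D) * hYZ - (Zcoef B C D : ZMod D) * hC)

lemma dvd_add_mul_iff_eq_val {D D' C : ℕ} [NeZero D] (h : Nat.Coprime D D') (hC : C < D)
    (k P : ℕ) : D ∣ D * k + P + D' * C ↔ C = (-(P : ZMod D) * (D' : ZMod D)⁻¹).val := by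
  have hu : IsUnit (D' : ZMod D) := (ZMod.isUnit_iff_coprime D' D).mpr h.symm
  rw [← ZMod.natCast_eq_zero_iff]
  push_cast
  rw [ZMod.natCast_self, zero_mul, zero_add]
  constructor
  · intro hE
    have hCval : (C : ZMod D) = -P * (D' : ZMod D)⁻¹ := by
      linear_combination (D' : ZMod D)⁻¹ * hE - (C : ZMod D) * ZMod.inv_mul_of_unit _ hu
    rw [← hCval, ZMod.val_cast_of_lt hC]
  · rintro rfl
    rw [ZMod.natCast_zmod_val]
    linear_combination -(P : ZMod D) * ZMod.mul_inv_of_unit _ hu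

lemma coprime_of_dvd_add_mul {B C D D' k P : ℕ} (hDD' : Nat.Coprime D D') (hBP : B ∣ P)
    (hg : Nat.gcd B (Nat.gcd C D) = 1) (hdvd : D ∣ D * k + P + D' * C) : Nat.Coprime B D := by
  have hgB : Nat.gcd B D ∣ B := Nat.gcd_dvd_left _ _
  have hgD : Nat.gcd B D ∣ D := Nat.gcd_dvd_right _ _
  have hgD'C : Nat.gcd B D ∣ D' * C :=
    (Nat.dvd_add_right (dvd_add (hgD.mul_right k) (hgB.trans hBP))).mp (hgD.trans hdvd)
  have hgC : Nat.gcd B D ∣ C := (Nat.Coprime.coprime_dvd_left hgD hDD').dvd_of_dvd_mul_left hgD'C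
  exact Nat.eq_one_of_dvd_one (hg ▸ Nat.dvd_gcd hgB (Nat.dvd_gcd hgC hgD))

lemma SGL3_condition_iff {D1 D2 B1 B2 C1 C2 : ℕ} [NeZero D1] [NeZero D2]
    (hcop : Nat.Coprime D1 D2) (hC1 : C1 < D1) (hC2 : C2 < D2) :
    (Nat.gcd B1 (Nat.gcd C1 D1) = 1 ∧ Nat.gcd B2 (Nat.gcd C2 D2) = 1 ∧
      D1 * D2 ∣ D1 * C2 + B1 * B2 + D2 * C1) ↔
    (Nat.Coprime B1 D1 ∧ Nat.Coprime B2 D2) ∧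
      C1 = (-((B1 * B2 : ℕ) : ZMod D1) * (D2 : ZMod D1)⁻¹).val ∧
      C2 = (-((B1 * B2 : ℕ) : ZMod D2) * (D1 : ZMod D2)⁻¹).val := by
  have hN : D1 * C2 + B1 * B2 + D2 * C1 = D2 * C1 + B1 * B2 + D1 * C2 := by ring
  have h1 := dvd_add_mul_iff_eq_val hcop hC1 C2 (B1 * B2)
  have h2 := dvd_add_mul_iff_eq_val hcop.symm hC2 C1 (B1 * B2)
  rw [← hN] at h2
  constructor
  · rintro ⟨hg1, hg2, hdvd⟩
    have hdvd1 := (dvd_mul_right D1 D2).trans hdvd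
    have hdvd2 := (dvd_mul_left D2 D1).trans hdvd
    refine ⟨⟨coprime_of_dvd_add_mul hcop (dvd_mul_right B1 B2) hg1 hdvd1, ?_⟩, h1.1 hdvd1,
      h2.1 hdvd2⟩
    exact coprime_of_dvd_add_mul hcop.symm (dvd_mul_left B2 B1) hg2 (hN ▸ hdvd2)
  · rintro ⟨⟨hB1, hB2⟩, hc1, hc2⟩
    exact ⟨Nat.Coprime.coprime_dvd_right (Nat.gcd_dvd_right _ _) hB1,
      Nat.Coprime.coprime_dvd_right (Nat.gcd_dvd_right _ _) hB2,
      hcop.mul_dvd_of_dvd_of_dvd (h1.2 hc1) (h2.2 hc2)⟩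

lemma efn_phase_eq {B B' C D D' : ℕ} [NeZero D] (m n : ℤ) (hB : Nat.Coprime B D)
    (hC : (B * B' + D' * C : ZMod D) = 0) :
    efn (((m * B + n * (Ycoef B C D * D' - Zcoef B C D * B') : ℤ) : ℝ) / D) =
      ZMod.stdAddChar
        ((m : ZMod D) * (B : ZMod D) + ((n * D' : ℤ) : ZMod D) * (B : ZMod D)⁻¹) := by
  rw [efn_intCast_div]
  push_cast
  rw [Ycoef_mul_sub_Zcoef_mul hB hC]
  ring_nf

lemma sum_sum_SGL3_summand_eq_mul {D1 D2 : ℕ} [NeZero D1] [NeZero D2] (hcop : Nat.Coprime D1 D2)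
    (m1 m2 n1 n2 : ℤ) (B1 B2 : ℕ) :
    (∑ C1 ∈ range D1, ∑ C2 ∈ range D2,
      if Nat.gcd B1 (Nat.gcd C1 D1) = 1 ∧ Nat.gcd B2 (Nat.gcd C2 D2) = 1 ∧
         (D1 * D2) ∣ (D1 * C2 + B1 * B2 + D2 * C1) then
        efn ((((m1 * B1 + n1 * (Ycoef B1 C1 D1 * D2 - Zcoef B1 C1 D1 * B2)) : ℤ) : ℝ) / D1
          + (((m2 * B2 + n2 * (Ycoef B2 C2 D2 * D1 - Zcoef B2 C2 D2 * B1)) : ℤ) : ℝ) / D2)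
      else 0) =
    (if Nat.gcd B1 D1 = 1 then
      ZMod.stdAddChar
        ((m1 : ZMod D1) * (B1 : ZMod D1) + ((n1 * D2 : ℤ) : ZMod D1) * (B1 : ZMod D1)⁻¹)
    else 0) *
    (if Nat.gcd B2 D2 = 1 then
      ZMod.stdAddChar
        ((m2 : ZMod D2) * (B2 : ZMod D2) + ((n2 * D1 : ℤ) : ZMod D2) * (B2 : ZMod D2)⁻¹)
    else 0) := by
  set c1 := (-((B1 * B2 : ℕ) : ZMod D1) * (D2 : ZMod D1)⁻¹).val
  set c2 := (-((B1 * B2 : ℕ) : ZMod D2) * (D1 : ZMod D2)⁻¹).val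
  rw [ite_zero_mul_ite_zero, ← sum_product']
  have hc1 : c1 < D1 := ZMod.val_lt _
  have hc2 : c2 < D2 := ZMod.val_lt _
  calc
    _ = ∑ x ∈ range D1 ×ˢ range D2,
        if x = (c1, c2) ∧ (Nat.Coprime B1 D1 ∧ Nat.Coprime B2 D2) then
          efn ((((m1 * B1 + n1 * (Ycoef B1 x.1 D1 * D2 - Zcoef B1 x.1 D1 * B2)) : ℤ) : ℝ) / D1
            + (((m2 * B2 + n2 * (Ycoef B2 x.2 D2 * D1 - Zcoef B2 x.2 D2 * B1)) : ℤ) : ℝ) / D2)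
        else 0 := by
      refine sum_congr rfl fun x hx => if_congr ?_ rfl rfl
      obtain ⟨hx1, hx2⟩ := mem_product.1 hx
      rw [SGL3_condition_iff hcop (mem_range.1 hx1) (mem_range.1 hx2), and_comm, Prod.ext_iff]
    _ = _ := by
      rw [sum_congr rfl fun x _ => ite_and .., sum_ite_eq',
        if_pos (mem_product.2 ⟨mem_range.2 hc1, mem_range.2 hc2⟩)]
      refine if_ctx_congr Iff.rfl (fun hB => ?_) fun _ => rfl
      obtain ⟨-, -, hdvd⟩ := (SGL3_condition_iff hcop hc1 hc2).2 ⟨hB, rfl, rfl⟩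
      have h1 := (ZMod.natCast_eq_zero_iff _ D1).2 ((dvd_mul_right D1 D2).trans hdvd)
      have h2 := (ZMod.natCast_eq_zero_iff _ D2).2 ((dvd_mul_left D2 D1).trans hdvd)
      push_cast [ZMod.natCast_self] at h1 h2
      rw [efn_add, efn_phase_eq m1 n1 hB.1 (by linear_combination h1),
        efn_phase_eq m2 n2 hB.2 (by linear_combination h2)]

/-- Twisted multiplicativity for coprime moduli:
`S(m₁,m₂,n₁,n₂;D₁,D₂) = S(m₁D₂,n₁;D₁) S(n₂D₁,m₂;D₂)`. -/
theorem stmt1 (D1 D2 : ℕ) (hD1 : 0 < D1) (hD2 : 0 < D2) (hcop : Nat.Coprime D1 D2)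
    (m1 m2 n1 n2 : ℤ) :
    SGL3 m1 m2 n1 n2 D1 D2 = Kl (m1 * D2) n1 D1 * Kl (n2 * D1) m2 D2 := by
  have : NeZero D1 := ⟨hD1.ne'⟩
  have : NeZero D2 := ⟨hD2.ne'⟩
  rw [Kl_mul_left m1 n1 hcop.symm, ← Kl_comm m2, Kl_eq_sum_range, Kl_eq_sum_range, sum_mul_sum,
    SGL3]
  refine sum_congr rfl fun B1 _ => ?_
  rw [sum_comm]
  exact sum_congr rfl fun B2 _ => sum_sum_SGL3_summand_eq_mul hcop m1 m2 n1 n2 B1 B2
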